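/- arXiv:2506.20072 — 3 statements merged into one kernel-verified Lean document; each statement's English description precedes it below -/
import Mathlib

section
/- Let G be a d-regular finite simple graph with E edges, let J be a δ-regular spanning subgraph of G with h edges, where δ ≥ 1, and set Δ = d − δ. For every integer k with h ≤ k ≤ E, the number of permutations ω of the edges of G satisfying k(ω) = k and J ⊆ G_ω equals h · (k−1)! · (E−k)! · [ 2·binom(E−h−Δ, k−h) − binom(E−h−2Δ, k−h) ], where binom(a, b) is interpreted as 0 when b > a. -/
open Finset

/-- The degree of a vertex `v` in the graph whose edge set is the finite set `s`
of edges (elements of `Sym2 V`). -/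
def degIn {V : Type*} [DecidableEq V] (s : Finset (Sym2 V)) (v : V) : ℕ :=
  (s.filter (fun e => v ∈ e)).card

/-- Given an ordering `ω` of a finite set `s` of edges, the set consisting of the
first `i` edges `e_{ω(1)}, …, e_{ω(i)}`. -/
def prefixEdges {V : Type*} [DecidableEq V] {s : Finset (Sym2 V)}
    (ω : Fin s.card ≃ {e : Sym2 V // e ∈ s}) (i : ℕ) : Finset (Sym2 V) :=
  (Finset.univ.filter (fun j : Fin s.card => (j : ℕ) < i)).image (fun j => (ω j : Sym2 V))

/-- `k(ω)`: the least `i` such that every vertex has degree at least `δ` in the graph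
formed by the first `i` edges of the ordering `ω`. -/
noncomputable def stopIndex {V : Type*} [Fintype V] [DecidableEq V] (δ : ℕ)
    {s : Finset (Sym2 V)} (ω : Fin s.card ≃ {e : Sym2 V // e ∈ s}) : ℕ :=
  sInf {i | ∀ v : V, δ ≤ degIn (prefixEdges ω i) v}

/-- The edge set of `G_ω`, i.e. the first `k(ω)` edges of the ordering `ω`. -/
noncomputable def finalEdges {V : Type*} [Fintype V] [DecidableEq V] (δ : ℕ)
    {s : Finset (Sym2 V)} (ω : Fin s.card ≃ {e : Sym2 V // e ∈ s}) : Finset (Sym2 V) :=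
  prefixEdges ω (stopIndex δ ω)

/-- A graph is `δ`-regular: every vertex has exactly `δ` neighbours. -/
def regOfDegree {V : Type*} (J : SimpleGraph V) (δ : ℕ) : Prop :=
  ∀ v : V, (J.neighborSet v).ncard = δ

/-!
Write `k = p + 1`. An ordering `ω` stops at `k` with `J ⊆ G_ω` exactly when its `k`-th edge `e`
lies in `J`, its first `p` edges contain `J - e`, and at one end `v` of `e` all of the first `p`
edges are edges of `J`: then `v` has degree `δ - 1` just before `e` arrives, while `J ⊆ G_ω`
forces every vertex to degree at least `δ` after it. So the count is a sum, over `e ∈ J` and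
over the admissible sets `U` of first `p` edges, of the `p! (E - k)!` orderings with prefix `U`
and `k`-th edge `e`. Let `B v` be the `Δ` edges of `G - J` at `v`. For `e = xy` the admissible
`U` are the `p`-subsets of `G - e` that contain `J - e` and avoid `B x` or `B y`; since `B x`
and `B y` are disjoint, inclusion–exclusion gives `2 C(E-h-Δ, k-h) - C(E-h-2Δ, k-h)` of them.
-/

theorem card_equiv_comp_eq {α β ι : Type*} [Fintype α] [Fintype β] [Fintype ι]
    [DecidableEq α] [DecidableEq β] [DecidableEq ι] (m : α → ι) (l : β → ι)
    (hml : ∀ i, Fintype.card {a // m a = i} = Fintype.card {b // l b = i}) :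
    Fintype.card {ω : α ≃ β // l ∘ ω = m} = ∏ i, (Fintype.card {a // m a = i}).factorial := by
  let ω₀ : α ≃ β := Equiv.ofFiberEquiv fun i => Fintype.equivOfCardEq (hml i)
  have hω₀ : ∀ a, l (ω₀ a) = m a := Equiv.ofFiberEquiv_map _
  -- `ω ↦ ω₀⁻¹ ∘ ω` identifies the label-preserving bijections with the stabiliser of `m`.
  rw [← DomMulAct.stabilizer_card m]
  refine Fintype.card_congr (Equiv.subtypeEquiv (Equiv.equivCongr (Equiv.refl α) ω₀.symm) ?_)
  intro ω
  simp only [funext_iff, Function.comp_apply, Equiv.equivCongr_apply_apply, Equiv.refl_symm,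
    Equiv.refl_apply]
  refine forall_congr' fun a => ?_
  rw [← hω₀ (ω₀.symm (ω a)), Equiv.apply_symm_apply]

theorem card_equiv_fin_apply_eq_and_lt_iff_mem {β : Type*} [Fintype β] [DecidableEq β] {N : ℕ}
    (hN : Fintype.card β = N) {p : Fin N} {b : β} {T : Finset β} (hb : b ∉ T) (hT : #T = p) :
    Fintype.card {ω : Fin N ≃ β // ω p = b ∧ ∀ j, j < p ↔ ω j ∈ T} =
      (p : ℕ).factorial * (N - 1 - p).factorial := by
  let m : Fin N → Fin 3 := fun j => if j < p then 0 else if j = p then 1 else 2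
  let l : β → Fin 3 := fun x => if x ∈ T then 0 else if x = b then 1 else 2
  have hiff : ∀ ω : Fin N ≃ β, (ω p = b ∧ ∀ j, j < p ↔ ω j ∈ T) ↔ l ∘ ω = m := by
    intro ω
    simp only [funext_iff, Function.comp_apply, l, m]
    constructor
    · rintro ⟨hp, hmem⟩ j
      rcases lt_trichotomy j p with hj | rfl | hj
      · simp [hj, (hmem j).mp hj]
      · simp [hp, hb]
      · have h1 : ω j ∉ T := fun h => lt_asymm hj ((hmem j).mpr h)
        have h2 : ω j ≠ b := hp ▸ ω.injective.ne hj.ne'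
        simp [h1, h2, not_lt.mpr hj.le, hj.ne']
    · intro h
      refine ⟨?_, fun j => ?_⟩
      · have := h p
        split_ifs at this <;> simp_all
      · have := h j
        split_ifs at this <;> simp_all
  have hm : ∀ i, Fintype.card {j // m j = i} = ![(p : ℕ), 1, N - 1 - p] i := by
    intro i
    rw [Fintype.card_subtype]
    fin_cases i <;> simp only [Fin.reduceFinMk, Fin.isValue, Matrix.cons_val] <;>
      [rw [← Fin.card_Iio p]; rw [← card_singleton p]; rw [← Fin.card_Ioi p]] <;>
      congr 1 <;> ext j <;> simp only [m, mem_filter, mem_univ, true_and, mem_Iio,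
        mem_singleton, mem_Ioi] <;> split_ifs <;> grind
  have hl : ∀ i, Fintype.card {x // l x = i} = ![(p : ℕ), 1, N - 1 - p] i := by
    intro i
    have hcompl : #(insert b T)ᶜ = N - 1 - p := by
      rw [card_compl, card_insert_of_notMem hb, hN, hT]; omega
    rw [Fintype.card_subtype]
    fin_cases i <;> simp only [Fin.reduceFinMk, Fin.isValue, Matrix.cons_val] <;>
      [rw [← hT]; rw [← card_singleton b]; rw [← hcompl]] <;>
      congr 1 <;> ext x <;> simp only [l, mem_filter, mem_univ, true_and, mem_singleton,
        mem_compl, mem_insert] <;> split_ifs <;> grind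
  rw [Fintype.card_congr (Equiv.subtypeEquivRight hiff),
    card_equiv_comp_eq m l fun i => (hm i).trans (hl i).symm, Fin.prod_univ_three]
  simp [hm]

section Sandwich

variable {α : Type*} [DecidableEq α] {A C : Finset α} {n : ℕ}

theorem card_filter_powersetCard_subset_disjoint {B : Finset α} (hAC : A ⊆ C) (hBC : B ⊆ C)
    (hAB : Disjoint A B) (hAn : #A ≤ n) :
    #{U ∈ C.powersetCard n | A ⊆ U ∧ Disjoint U B} = (#C - #A - #B).choose (n - #A) := by
  have : {U ∈ C.powersetCard n | A ⊆ U ∧ Disjoint U B} = {U ∈ (C \ B).powersetCard n | A ⊆ U} := by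
    ext U
    simp only [mem_filter, mem_powersetCard, subset_sdiff]
    tauto
  rw [this, card_filter_powersetCard_subset A _ n (subset_sdiff.mpr ⟨hAC, hAB⟩) hAn,
    card_sdiff_of_subset hBC, Nat.sub_right_comm]

theorem card_filter_powersetCard_subset_disjoint_or {B₁ B₂ : Finset α} (hAC : A ⊆ C)
    (hB₁C : B₁ ⊆ C) (hB₂C : B₂ ⊆ C) (hAB₁ : Disjoint A B₁) (hAB₂ : Disjoint A B₂)
    (hB₁B₂ : Disjoint B₁ B₂) (hAn : #A ≤ n) :
    #{U ∈ C.powersetCard n | A ⊆ U ∧ (Disjoint U B₁ ∨ Disjoint U B₂)} +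
        (#C - #A - (#B₁ + #B₂)).choose (n - #A) =
      (#C - #A - #B₁).choose (n - #A) + (#C - #A - #B₂).choose (n - #A) := by
  have hinter : {U ∈ C.powersetCard n | A ⊆ U ∧ Disjoint U B₁} ∩
      {U ∈ C.powersetCard n | A ⊆ U ∧ Disjoint U B₂} =
      {U ∈ C.powersetCard n | A ⊆ U ∧ Disjoint U (B₁ ∪ B₂)} := by
    rw [← filter_and]
    simp only [disjoint_union_right]
    congr! 1
    tauto
  simp only [and_or_left, filter_or]
  rw [← card_union_of_disjoint hB₁B₂, ← card_filter_powersetCard_subset_disjoint hAC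
      (union_subset hB₁C hB₂C) (disjoint_union_right.mpr ⟨hAB₁, hAB₂⟩) hAn, ← hinter,
    card_union_add_card_inter, card_filter_powersetCard_subset_disjoint hAC hB₁C hAB₁ hAn,
    card_filter_powersetCard_subset_disjoint hAC hB₂C hAB₂ hAn]

end Sandwich

section Prefix

variable {V : Type*} [DecidableEq V] {s : Finset (Sym2 V)} (ω : Fin s.card ≃ {e : Sym2 V // e ∈ s})

theorem mem_prefixEdges {i : ℕ} {g : Sym2 V} :
    g ∈ prefixEdges ω i ↔ ∃ j : Fin s.card, (j : ℕ) < i ∧ (ω j : Sym2 V) = g := by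
  simp [prefixEdges]

theorem prefixEdges_subset (i : ℕ) : prefixEdges ω i ⊆ s := by
  intro g hg
  obtain ⟨j, -, rfl⟩ := (mem_prefixEdges ω).mp hg
  exact (ω j).2

theorem prefixEdges_mono {i i' : ℕ} (h : i ≤ i') : prefixEdges ω i ⊆ prefixEdges ω i' := by
  intro g hg
  obtain ⟨j, hj, rfl⟩ := (mem_prefixEdges ω).mp hg
  exact (mem_prefixEdges ω).mpr ⟨j, hj.trans_le h, rfl⟩

theorem apply_notMem_prefixEdges (p : Fin s.card) : (ω p : Sym2 V) ∉ prefixEdges ω p := by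
  rw [mem_prefixEdges]
  rintro ⟨j, hj, hjp⟩
  exact hj.ne (congrArg Fin.val (ω.injective (Subtype.ext hjp)))

theorem prefixEdges_succ (p : Fin s.card) :
    prefixEdges ω (p + 1) = insert (ω p : Sym2 V) (prefixEdges ω p) := by
  ext g
  simp only [mem_prefixEdges, mem_insert, Nat.lt_succ_iff_lt_or_eq, or_and_right, exists_or]
  rw [or_comm]
  refine or_congr_left ⟨fun ⟨j, hj, hg⟩ => ?_, fun hg => ⟨p, rfl, hg.symm⟩⟩
  rw [← hg, Fin.ext hj]

theorem card_prefixEdges (p : Fin s.card) : #(prefixEdges ω p) = p := by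
  have : univ.filter (fun j : Fin s.card => (j : ℕ) < p) = Iio p := by ext; simp
  rw [prefixEdges, card_image_of_injective _ fun a b hab => ω.injective (Subtype.ext hab), this,
    Fin.card_Iio]

theorem prefixEdges_eq_iff {i : ℕ} {U : Finset (Sym2 V)} (hU : U ⊆ s) :
    prefixEdges ω i = U ↔ ∀ j : Fin s.card, (j : ℕ) < i ↔ (ω j : Sym2 V) ∈ U := by
  constructor
  · rintro rfl j
    refine ⟨fun hj => (mem_prefixEdges ω).mpr ⟨j, hj, rfl⟩, fun hj => ?_⟩
    obtain ⟨j', hj', hjj'⟩ := (mem_prefixEdges ω).mp hj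
    rwa [← ω.injective (Subtype.ext hjj')]
  · intro h
    ext g
    refine ⟨fun hg => ?_, fun hg => ?_⟩
    · obtain ⟨j, hj, rfl⟩ := (mem_prefixEdges ω).mp hg
      exact (h j).mp hj
    · obtain ⟨j, hj⟩ := ω.surjective ⟨g, hU hg⟩
      exact (mem_prefixEdges ω).mpr ⟨j, (h j).mpr (by rwa [hj]), by rw [hj]⟩

end Prefix

section Degree

variable {V : Type*} [DecidableEq V]

theorem degIn_mono {t u : Finset (Sym2 V)} (h : t ⊆ u) (v : V) : degIn t v ≤ degIn u v :=
  card_le_card (filter_subset_filter _ h)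

theorem degIn_edgeFinset [Fintype V] (G : SimpleGraph V) [DecidableRel G.Adj] (v : V) :
    degIn G.edgeFinset v = G.degree v := by
  rw [degIn, ← G.incidenceFinset_eq_filter, G.card_incidenceFinset_eq_degree]

/-- `P` contains the `δ - 1` edges of `J - e` at `v`, so `v` is deficient in `P` exactly when
these are all of its edges in `P`. -/
theorem degIn_lt_iff_forall_mem {J P : Finset (Sym2 V)} {e : Sym2 V} {v : V} {δ : ℕ}
    (hJv : degIn J v = δ) (heJ : e ∈ J) (hve : v ∈ e) (hJP : J.erase e ⊆ P) (heP : e ∉ P) :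
    degIn P v < δ ↔ ∀ g ∈ P, v ∈ g → g ∈ J := by
  set A := (J.filter (v ∈ ·)).erase e
  have hAP : A ⊆ P.filter (v ∈ ·) := fun g hg => by
    obtain ⟨hge, hgJ, hvg⟩ := by simpa [A] using hg
    exact mem_filter.mpr ⟨hJP (mem_erase.mpr ⟨hge, hgJ⟩), hvg⟩
  have hA : #A + 1 = δ := by
    rw [card_erase_add_one (mem_filter.mpr ⟨heJ, hve⟩), ← hJv, degIn]
  rw [degIn, ← hA, Nat.lt_succ_iff]
  constructor
  · intro hcard g hgP hvg
    have := (eq_of_subset_of_card_le hAP hcard).symm ▸ mem_filter.mpr ⟨hgP, hvg⟩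
    exact (mem_filter.mp (mem_of_mem_erase this)).1
  · intro hP
    refine card_le_card fun g hg => ?_
    obtain ⟨hgP, hvg⟩ := mem_filter.mp hg
    exact mem_erase.mpr ⟨fun hge => heP (hge ▸ hgP), mem_filter.mpr ⟨hP g hgP hvg, hvg⟩⟩

theorem subset_insert_and_exists_degIn_lt_iff {J P : Finset (Sym2 V)} {e : Sym2 V} {δ : ℕ}
    (hJ : ∀ v, degIn J v = δ) (heP : e ∉ P) :
    (J ⊆ insert e P ∧ ∃ v, degIn P v < δ) ↔
      e ∈ J ∧ J.erase e ⊆ P ∧ ∃ v ∈ e, ∀ g ∈ P, v ∈ g → g ∈ J := by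
  rw [subset_insert_iff]
  constructor
  · rintro ⟨hJP, v, hv⟩
    have heJ : e ∈ J ∧ v ∈ e := by
      by_contra hne
      refine hv.not_ge ((hJ v).symm.trans_le (card_le_card fun g hg => ?_))
      obtain ⟨hgJ, hvg⟩ := mem_filter.mp hg
      refine mem_filter.mpr ⟨hJP (mem_erase.mpr ⟨?_, hgJ⟩), hvg⟩
      rintro rfl
      exact hne ⟨hgJ, hvg⟩
    exact ⟨heJ.1, hJP, v, heJ.2, (degIn_lt_iff_forall_mem (hJ v) heJ.1 heJ.2 hJP heP).mp hv⟩
  · rintro ⟨heJ, hJP, v, hve, hv⟩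
    exact ⟨hJP, v, (degIn_lt_iff_forall_mem (hJ v) heJ hve hJP heP).mpr hv⟩

end Degree

section StoppingTime

variable {V : Type*} [Fintype V] [DecidableEq V] {s : Finset (Sym2 V)}
  (ω : Fin s.card ≃ {e : Sym2 V // e ∈ s})

theorem stopIndex_eq_succ_iff (δ i : ℕ) :
    stopIndex δ ω = i + 1 ↔
      (∀ v, δ ≤ degIn (prefixEdges ω (i + 1)) v) ∧ ∃ v, degIn (prefixEdges ω i) v < δ := by
  set T := {i | ∀ v, δ ≤ degIn (prefixEdges ω i) v}
  have hT : ∀ i i', i ≤ i' → i ∈ T → i' ∈ T := fun i i' hii' hi v =>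
    (hi v).trans (degIn_mono (prefixEdges_mono ω hii') v)
  rw [stopIndex, Nat.sInf_upward_closed_eq_succ_iff hT]
  simp [T]

theorem stopIndex_eq_succ_and_subset_finalEdges_iff {J : Finset (Sym2 V)} {δ : ℕ}
    (hJ : ∀ v, degIn J v = δ) (p : Fin s.card) :
    (stopIndex δ ω = p + 1 ∧ J ⊆ finalEdges δ ω) ↔
      (ω p : Sym2 V) ∈ J ∧ J.erase (ω p) ⊆ prefixEdges ω p ∧
        ∃ v ∈ (ω p : Sym2 V), ∀ g ∈ prefixEdges ω p, v ∈ g → g ∈ J := by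
  rw [← subset_insert_and_exists_degIn_lt_iff hJ (apply_notMem_prefixEdges ω p),
    ← prefixEdges_succ]
  constructor
  · rintro ⟨hstop, hJω⟩
    rw [finalEdges, hstop] at hJω
    exact ⟨hJω, ((stopIndex_eq_succ_iff ω δ p).mp hstop).2⟩
  · rintro ⟨hJω, hdef⟩
    have hstop : stopIndex δ ω = p + 1 := (stopIndex_eq_succ_iff ω δ p).mpr
      ⟨fun v => (hJ v).symm.trans_le (degIn_mono hJω v), hdef⟩
    exact ⟨hstop, by rwa [finalEdges, hstop]⟩

end StoppingTime

theorem card_filter_apply_eq_and_prefixEdges_eq {V : Type*} [DecidableEq V] {s : Finset (Sym2 V)}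
    (p : Fin s.card) {e : Sym2 V} {U : Finset (Sym2 V)} (he : e ∈ s) (hU : U ⊆ s.erase e)
    (hUp : #U = p) :
    #{ω : Fin s.card ≃ {e // e ∈ s} | (ω p : Sym2 V) = e ∧ prefixEdges ω p = U} =
      (p : ℕ).factorial * (s.card - 1 - p).factorial := by
  have heU : (⟨e, he⟩ : {e // e ∈ s}) ∉ U.subtype (· ∈ s) := by
    simpa using fun h => (notMem_erase e s) (hU h)
  have hcard : #(U.subtype (· ∈ s)) = p := by
    rw [card_subtype, filter_true_of_mem fun g hg => mem_of_mem_erase (hU hg), hUp]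
  rw [← Fintype.card_subtype,
    ← card_equiv_fin_apply_eq_and_lt_iff_mem (Fintype.card_coe s) heU hcard]
  refine Fintype.card_congr (Equiv.subtypeEquivRight fun ω => ?_)
  rw [prefixEdges_eq_iff ω (hU.trans (erase_subset e s)), Subtype.ext_iff]
  simp

section Admissible

variable {V : Type*} [Fintype V] [DecidableEq V]

def admissiblePrefixes (G J : Finset (Sym2 V)) (e : Sym2 V) (p : ℕ) : Finset (Finset (Sym2 V)) :=
  {U ∈ (G.erase e).powersetCard p | J.erase e ⊆ U ∧ ∃ v ∈ e, ∀ g ∈ U, v ∈ g → g ∈ J}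

variable {G J : SimpleGraph V} [DecidableRel G.Adj] [DecidableRel J.Adj] {d δ : ℕ}

theorem card_admissiblePrefixes_add (hG : G.IsRegularOfDegree d) (hJ : J.IsRegularOfDegree δ)
    (hJG : J ≤ G) {e : Sym2 V} (he : e ∈ J.edgeFinset) {p : ℕ} (hp : #J.edgeFinset ≤ p + 1) :
    #(admissiblePrefixes G.edgeFinset J.edgeFinset e p) +
        (#G.edgeFinset - #J.edgeFinset - 2 * (d - δ)).choose (p + 1 - #J.edgeFinset) =
      2 * (#G.edgeFinset - #J.edgeFinset - (d - δ)).choose (p + 1 - #J.edgeFinset) := by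
  have hJG' : J.edgeFinset ⊆ G.edgeFinset := SimpleGraph.edgeFinset_mono hJG
  induction e using Sym2.inductionOn with | hf x y => ?_
  have hxy : x ≠ y := (J.mem_edgeSet.mp (J.mem_edgeFinset.mp he)).ne
  set B : V → Finset (Sym2 V) :=
    fun v => {g ∈ G.edgeFinset | v ∈ g} \ {g ∈ J.edgeFinset | v ∈ g}
  have hBcard : ∀ v, #(B v) = d - δ := fun v => by
    rw [card_sdiff_of_subset (filter_subset_filter _ hJG'), ← degIn, ← degIn, degIn_edgeFinset,
      degIn_edgeFinset, hG v, hJ v]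
  have hBJ : ∀ v, Disjoint (B v) J.edgeFinset := fun v => by
    simp +contextual [B, disjoint_left]
  have hBC : ∀ v, B v ⊆ G.edgeFinset.erase s(x, y) := fun v g hg =>
    mem_erase.mpr ⟨fun hge => disjoint_left.mp (hBJ v) hg (hge ▸ he),
      (mem_filter.mp (mem_sdiff.mp hg).1).1⟩
  have hAB : ∀ v, Disjoint (J.edgeFinset.erase s(x, y)) (B v) := fun v =>
    ((hBJ v).mono_right (erase_subset _ _)).symm
  have hBxy : Disjoint (B x) (B y) := disjoint_left.mpr fun g hgx hgy => by
    have hg : g = s(x, y) := (Sym2.mem_and_mem_iff hxy).mp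
      ⟨(mem_filter.mp (mem_sdiff.mp hgx).1).2, (mem_filter.mp (mem_sdiff.mp hgy).1).2⟩
    exact disjoint_left.mp (hBJ x) hgx (hg ▸ he)
  have hdisj : ∀ U ⊆ G.edgeFinset, ∀ v,
      (∀ g ∈ U, v ∈ g → g ∈ J.edgeFinset) ↔ Disjoint U (B v) := fun U hU v => by
    simp only [B, disjoint_left, mem_sdiff, mem_filter, not_and]
    grind
  have hadm : admissiblePrefixes G.edgeFinset J.edgeFinset s(x, y) p =
      {U ∈ (G.edgeFinset.erase s(x, y)).powersetCard p |
        J.edgeFinset.erase s(x, y) ⊆ U ∧ (Disjoint U (B x) ∨ Disjoint U (B y))} := by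
    rw [admissiblePrefixes]
    refine filter_congr fun U hU => ?_
    have hUG := (mem_powersetCard.mp hU).1.trans (erase_subset _ _)
    simp only [Sym2.mem_iff, exists_eq_or_imp, exists_eq_left, hdisj U hUG]
  have key := card_filter_powersetCard_subset_disjoint_or (erase_subset_erase _ hJG')
    (hBC x) (hBC y) (hAB x) (hAB y) hBxy (n := p) (by rw [card_erase_of_mem he]; omega)
  have hh : 1 ≤ #J.edgeFinset := card_pos.mpr ⟨_, he⟩
  rw [← hadm, card_erase_of_mem he, card_erase_of_mem (hJG' he), hBcard, hBcard] at key
  rw [show #G.edgeFinset - 1 - (#J.edgeFinset - 1) = #G.edgeFinset - #J.edgeFinset by omega,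
    show p - (#J.edgeFinset - 1) = p + 1 - #J.edgeFinset by omega] at key
  rw [two_mul, two_mul, ← key]

end Admissible

section Counting

variable {V : Type*} [Fintype V] [DecidableEq V] {s : Finset (Sym2 V)}

theorem prefixEdges_mem_admissiblePrefixes_iff (ω : Fin s.card ≃ {e : Sym2 V // e ∈ s})
    (J : Finset (Sym2 V)) (p : Fin s.card) :
    prefixEdges ω p ∈ admissiblePrefixes s J (ω p) p ↔
      J.erase (ω p) ⊆ prefixEdges ω p ∧
        ∃ v ∈ (ω p : Sym2 V), ∀ g ∈ prefixEdges ω p, v ∈ g → g ∈ J := by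
  simp [admissiblePrefixes, subset_erase, prefixEdges_subset, apply_notMem_prefixEdges,
    card_prefixEdges]

theorem ncard_stopIndex_eq_succ_and_subset_finalEdges {J : SimpleGraph V} [DecidableRel J.Adj]
    {δ : ℕ} (hJs : J.edgeFinset ⊆ s) (hJ : J.IsRegularOfDegree δ) {p : ℕ} (hp : p < s.card) :
    {ω : Fin s.card ≃ {e // e ∈ s} | stopIndex δ ω = p + 1 ∧ J.edgeSet ⊆ ↑(finalEdges δ ω)}.ncard =
      (∑ e ∈ J.edgeFinset, #(admissiblePrefixes s J.edgeFinset e p)) *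
        (p.factorial * (s.card - 1 - p).factorial) := by
  classical
  set q : Fin s.card := ⟨p, hp⟩
  set t := J.edgeFinset.sigma fun e => admissiblePrefixes s J.edgeFinset e q
  have hset : {ω : Fin s.card ≃ {e // e ∈ s} |
      stopIndex δ ω = p + 1 ∧ J.edgeSet ⊆ ↑(finalEdges δ ω)} =
      ↑(univ.filter fun ω => (⟨ω q, prefixEdges ω q⟩ : (_ : Sym2 V) × Finset (Sym2 V)) ∈ t) := by
    ext ω
    rw [Set.mem_ofPred_eq, ← SimpleGraph.coe_edgeFinset, coe_subset, coe_filter,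
      stopIndex_eq_succ_and_subset_finalEdges_iff ω
        (fun v => (degIn_edgeFinset J v).trans (hJ v)) q,
      Set.mem_ofPred_eq, mem_sigma, prefixEdges_mem_admissiblePrefixes_iff]
    simp only [mem_univ, true_and]
  have hfiber : ∀ b ∈ t, #{ω : Fin s.card ≃ {e // e ∈ s} |
      (⟨ω q, prefixEdges ω q⟩ : (_ : Sym2 V) × Finset (Sym2 V)) = b} =
      p.factorial * (s.card - 1 - p).factorial := by
    rintro ⟨e, U⟩ hb
    obtain ⟨he, hU⟩ := mem_sigma.mp hb
    obtain ⟨hUs, hUp⟩ := mem_powersetCard.mp (mem_filter.mp hU).1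
    simp only [Sigma.mk.injEq, heq_eq_eq]
    exact card_filter_apply_eq_and_prefixEdges_eq q (hJs he) hUs hUp
  rw [hset, Set.ncard_coe_finset, ← sum_card_fiberwise_eq_card_filter, sum_const_nat hfiber,
    card_sigma]

end Counting

theorem card_edgeFinset_pos_of_isRegularOfDegree {V : Type*} [Fintype V] [Nonempty V]
    {J : SimpleGraph V} [DecidableRel J.Adj] {δ : ℕ} (hJ : J.IsRegularOfDegree δ) (hδ : 1 ≤ δ) :
    0 < #J.edgeFinset := by
  obtain ⟨v⟩ := ‹Nonempty V›
  obtain ⟨w, hvw⟩ := J.degree_pos_iff_exists_adj v |>.mp (hJ v ▸ hδ)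
  exact card_pos.mpr ⟨s(v, w), J.mem_edgeFinset.mpr hvw⟩

/-- Let `G` be a `d`-regular finite simple graph with `E` edges, `J` a `δ`-regular
spanning subgraph with `h` edges, `δ ≥ 1`, and `Δ = d − δ`.  For `h ≤ k ≤ E`, the number
of orderings `ω` of the edges of `G` with `k(ω) = k` and `J ⊆ G_ω` equals
`h·(k−1)!·(E−k)!·[2·C(E−h−Δ, k−h) − C(E−h−2Δ, k−h)]`. -/
theorem count_orderings_with_given_stopping_time
    {V : Type*} [Fintype V] [DecidableEq V] [Nonempty V]
    (G J : SimpleGraph V) [DecidableRel G.Adj] [DecidableRel J.Adj]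
    (d δ : ℕ) (hδ : 1 ≤ δ) (hG : G.IsRegularOfDegree d)
    (hJG : J ≤ G) (hJ : J.IsRegularOfDegree δ)
    (h E Δ k : ℕ) (hh : h = J.edgeFinset.card) (hE : E = G.edgeFinset.card)
    (hΔ : Δ = d - δ) (hk1 : h ≤ k) (hk2 : k ≤ E) :
    ({ω : Fin G.edgeFinset.card ≃ {e : Sym2 V // e ∈ G.edgeFinset} |
        stopIndex δ ω = k ∧ J.edgeSet ⊆ ↑(finalEdges δ ω)}.ncard : ℤ) =
    (h : ℤ) * ((k - 1).factorial : ℤ) * ((E - k).factorial : ℤ) *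
      (2 * ((E - h - Δ).choose (k - h) : ℤ) - ((E - h - 2 * Δ).choose (k - h) : ℤ)) := by
  subst hh hE hΔ
  obtain ⟨p, rfl⟩ : ∃ p, k = p + 1 :=
    ⟨k - 1, by have := card_edgeFinset_pos_of_isRegularOfDegree hJ hδ; omega⟩
  have hadm : ∀ e ∈ J.edgeFinset, (#(admissiblePrefixes G.edgeFinset J.edgeFinset e p) : ℤ) =
      2 * ((#G.edgeFinset - #J.edgeFinset - (d - δ)).choose (p + 1 - #J.edgeFinset) : ℤ) -
        ((#G.edgeFinset - #J.edgeFinset - 2 * (d - δ)).choose (p + 1 - #J.edgeFinset) : ℤ) :=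
    fun e he => eq_sub_of_add_eq (by exact_mod_cast card_admissiblePrefixes_add hG hJ hJG he hk1)
  rw [ncard_stopIndex_eq_succ_and_subset_finalEdges (SimpleGraph.edgeFinset_mono hJG) hJ hk2,
    Nat.cast_mul, Nat.cast_sum, sum_congr rfl hadm, sum_const, nsmul_eq_mul, Nat.add_sub_cancel,
    show #G.edgeFinset - 1 - p = #G.edgeFinset - (p + 1) by omega]
  push_cast
  ring
end

section
/- For all integers r ≥ 3, n ≥ 1, and i with 2 ≤ i ≤ r, one has binom(nr, r) − binom(nr−i, r) ≥ (binom(nr, r) − binom(nr−1, r)) · (2 − (r−1)/(nr−1)), where binom(a, b) is interpreted as 0 when b > a. -/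
/-!
Put `N = nr`. By Pascal's rule `C(N,r) - C(N-1,r) = C(N-1,r-1)` and
`C(N,r) - C(N-2,r) = C(N-1,r-1) + C(N-2,r-1)`, while
`C(N-2,r-1) = C(N-1,r-1) · (N-r)/(N-1)`. Hence the inequality is an equality for `i = 2`,
and for larger `i` the left-hand side only grows because `C(·,r)` is monotone.
-/

namespace Nat

theorem cast_choose_mul_succ_eq {R : Type*} [CommRing R] (m k : ℕ) :
    (m.choose k : R) * (m + 1) = (m + 1).choose k * (m + 1 - k) := by
  rcases le_or_gt k (m + 1) with hk | hk
  · have h := congrArg (Nat.cast : ℕ → R) (choose_mul_succ_eq m k)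
    push_cast [Nat.cast_sub hk] at h
    exact h
  · simp [choose_eq_zero_of_lt hk, choose_eq_zero_of_lt (lt_of_succ_lt hk)]

theorem cast_choose_sub_choose_sub_two_eq (m k : ℕ) :
    ((m + 2).choose (k + 1) - m.choose (k + 1) : ℝ) =
      ((m + 2).choose (k + 1) - (m + 1).choose (k + 1)) * (2 - k / (m + 1)) := by
  have hrow := cast_choose_mul_succ_eq (R := ℝ) m k
  simp only [choose_succ_succ' (m + 1) k, choose_succ_succ' m k, cast_add]
  field_simp
  linarith

end Nat

theorem choose_difference_inequality_general (r n i : ℕ) (hn : 1 ≤ n)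
    (hi : 2 ≤ i) (hir : i ≤ r) :
    (((n * r).choose r : ℝ) - ((n * r - i).choose r : ℝ)) ≥
      (((n * r).choose r : ℝ) - ((n * r - 1).choose r : ℝ)) *
        (2 - ((r : ℝ) - 1) / ((n : ℝ) * (r : ℝ) - 1)) := by
  obtain ⟨k, rfl⟩ : ∃ k, r = k + 1 := ⟨r - 1, by omega⟩
  have hN : 2 ≤ n * (k + 1) := by nlinarith
  obtain ⟨m, hm⟩ : ∃ m, n * (k + 1) = m + 2 := ⟨_, (Nat.sub_add_cancel hN).symm⟩
  have hmR : (n : ℝ) * ((k + 1 : ℕ) : ℝ) - 1 = m + 1 := by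
    rw [← Nat.cast_mul, hm]; push_cast; ring
  rw [hmR, show n * (k + 1) - 1 = m + 1 by omega, hm]
  push_cast
  rw [add_sub_cancel_right, ← Nat.cast_choose_sub_choose_sub_two_eq]
  gcongr
  omega

/-- For all integers `r ≥ 3`, `n ≥ 1` and `2 ≤ i ≤ r`, one has
`C(nr,r) − C(nr−i,r) ≥ (C(nr,r) − C(nr−1,r))·(2 − (r−1)/(nr−1))` (as real numbers). -/
theorem choose_difference_inequality (r n i : ℕ) (hr : 3 ≤ r) (hn : 1 ≤ n)
    (hi : 2 ≤ i) (hir : i ≤ r) :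
    (((n * r).choose r : ℝ) - ((n * r - i).choose r : ℝ)) ≥
      (((n * r).choose r : ℝ) - ((n * r - 1).choose r : ℝ)) *
        (2 - ((r : ℝ) - 1) / ((n : ℝ) * (r : ℝ) - 1)) :=
  choose_difference_inequality_general r n i hn hi hir
end

section
/- For every integer n ≥ 2 and every real number A ≥ n², one has | log( A(A−1)(A−2)⋯(A−(n−1)) / A^n ) + n²/(2A) | ≤ 2/n. -/
/-!
Write the ratio as `∏_{j<n} (1 - j/A)` and take logarithms termwise. For `x ≤ 1/2` one has
`-x - 2x² ≤ log (1 - x) ≤ -x`, so the logarithm is `-n(n-1)/(2A)` up to an error in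
`[-2 ∑ (j/A)², 0]`. Adding `n²/(2A)` leaves `n/(2A) ≤ 1/(2n)`, and `A ≥ n²` makes the error
`2 ∑ (j/A)² ≤ 2n³/A²` at most `2/n`.
-/

open Finset Real

lemma Real.log_one_sub_add_self_nonpos {x : ℝ} (hx : x < 1) : log (1 - x) + x ≤ 0 := by
  linarith [log_le_sub_one_of_pos (sub_pos.2 hx)]

lemma Real.neg_two_mul_sq_le_log_one_sub_add_self {x : ℝ} (hx : x ≤ 1 / 2) :
    -(2 * x ^ 2) ≤ log (1 - x) + x := by
  have hpos : 0 < 1 - x := by linarith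
  have hinv : 1 - (1 - x)⁻¹ = -(x / (1 - x)) := by field_simp; ring
  have hquot : x / (1 - x) ≤ x + 2 * x ^ 2 := by
    rw [div_le_iff₀ hpos]
    nlinarith [sq_nonneg x]
  linarith [one_sub_inv_le_log_of_pos hpos]

section SumLogOneSub

variable {ι : Type*} (s : Finset ι) (x : ι → ℝ)

lemma Real.sum_log_one_sub_add_sum_nonpos (hx : ∀ i ∈ s, x i < 1) :
    ∑ i ∈ s, log (1 - x i) + ∑ i ∈ s, x i ≤ 0 := by
  rw [← sum_add_distrib]
  exact sum_nonpos fun i hi ↦ log_one_sub_add_self_nonpos (hx i hi)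

lemma Real.neg_two_mul_sum_sq_le_sum_log_one_sub_add_sum
    (hx : ∀ i ∈ s, x i ≤ 1 / 2) :
    -(2 * ∑ i ∈ s, x i ^ 2) ≤ ∑ i ∈ s, log (1 - x i) + ∑ i ∈ s, x i := by
  rw [← sum_add_distrib, mul_sum, ← sum_neg_distrib]
  exact sum_le_sum fun i hi ↦ neg_two_mul_sq_le_log_one_sub_add_self (hx i hi)

end SumLogOneSub

lemma prod_range_sub_div_pow {A : ℝ} (hA : A ≠ 0) (n : ℕ) :
    (∏ j ∈ range n, (A - j)) / A ^ n = ∏ j ∈ range n, (1 - j / A) := by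
  rw [show A ^ n = ∏ _j ∈ range n, A by simp, ← prod_div_distrib]
  exact prod_congr rfl fun j _ ↦ by rw [sub_div, div_self hA]

lemma sum_range_natCast_div (A : ℝ) (n : ℕ) :
    ∑ j ∈ range n, (j : ℝ) / A = n * (n - 1) / (2 * A) := by
  have h := congrArg (Nat.cast (R := ℝ)) (sum_range_id_mul_two n)
  rcases n.eq_zero_or_pos with rfl | hn
  · simp
  push_cast [Nat.cast_sub hn] at h
  rw [← sum_div, div_mul_eq_div_div_swap, ← h]
  ring

lemma sum_range_natCast_div_sq_le {A : ℝ} (n : ℕ) :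
    ∑ j ∈ range n, ((j : ℝ) / A) ^ 2 ≤ n ^ 3 / A ^ 2 := by
  calc ∑ j ∈ range n, ((j : ℝ) / A) ^ 2 ≤ ∑ _j ∈ range n, (n : ℝ) ^ 2 / A ^ 2 := by
        refine sum_le_sum fun j hj ↦ ?_
        have hjn : (j : ℝ) ≤ n := by exact_mod_cast (mem_range.1 hj).le
        rw [div_pow]
        gcongr
    _ = n ^ 3 / A ^ 2 := by rw [sum_const, card_range, nsmul_eq_mul]; ring

lemma log_prod_range_sub_div_pow_bounds {A : ℝ} {n : ℕ} (hA : 0 < A)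
    (hnA : 2 * ((n : ℝ) - 1) ≤ A) :
    -(2 * (n ^ 3 / A ^ 2)) ≤ log ((∏ j ∈ range n, (A - j)) / A ^ n) + n * (n - 1) / (2 * A) ∧
      log ((∏ j ∈ range n, (A - j)) / A ^ n) + n * (n - 1) / (2 * A) ≤ 0 := by
  have hx : ∀ j ∈ range n, (j : ℝ) / A ≤ 1 / 2 := by
    intro j hj
    have hjn : (j : ℝ) + 1 ≤ n := by exact_mod_cast mem_range.1 hj
    rw [div_le_iff₀ hA]
    linarith
  have hlog : log ((∏ j ∈ range n, (A - j)) / A ^ n) = ∑ j ∈ range n, log (1 - j / A) := by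
    rw [prod_range_sub_div_pow hA.ne', log_prod]
    exact fun j hj ↦ by linarith [hx j hj]
  rw [hlog, ← sum_range_natCast_div]
  refine ⟨?_, sum_log_one_sub_add_sum_nonpos _ _ fun j hj ↦ by linarith [hx j hj]⟩
  linarith [neg_two_mul_sum_sq_le_sum_log_one_sub_add_sum _ _ hx,
    sum_range_natCast_div_sq_le (A := A) n]

theorem log_falling_factorial_estimate_general (n : ℕ) (A : ℝ)
    (hA : (n : ℝ) ^ 2 ≤ A) :
    |Real.log ((∏ j ∈ Finset.range n, (A - (j : ℝ))) / A ^ n) +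
        (n : ℝ) ^ 2 / (2 * A)| ≤ 2 / (n : ℝ) := by
  rcases n.eq_zero_or_pos with rfl | hn
  · simp
  have hn₁ : (1 : ℝ) ≤ n := by exact_mod_cast hn
  have hA₀ : 0 < A := by nlinarith
  obtain ⟨hlower, hupper⟩ := log_prod_range_sub_div_pow_bounds hA₀ (n := n) (by nlinarith)
  have hsplit : (n : ℝ) ^ 2 / (2 * A) = n * (n - 1) / (2 * A) + n / (2 * A) := by ring
  have herror : 2 * ((n : ℝ) ^ 3 / A ^ 2) ≤ 2 / n := by
    rw [← mul_div_assoc, div_le_div_iff₀ (by positivity) (by positivity)]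
    nlinarith
  have hmain : (n : ℝ) / (2 * A) ≤ 2 / n := by
    rw [div_le_div_iff₀ (by positivity) (by positivity)]
    nlinarith
  have hmain_nonneg : 0 ≤ (n : ℝ) / (2 * A) := by positivity
  rw [abs_le]
  constructor <;> linarith

/-- For every integer `n ≥ 2` and every real `A ≥ n²`,
`| log(A(A−1)⋯(A−(n−1))/Aⁿ) + n²/(2A) | ≤ 2/n`. -/
theorem log_falling_factorial_estimate (n : ℕ) (hn : 2 ≤ n) (A : ℝ)
    (hA : (n : ℝ) ^ 2 ≤ A) :
    |Real.log ((∏ j ∈ Finset.range n, (A - (j : ℝ))) / A ^ n) +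
        (n : ℝ) ^ 2 / (2 * A)| ≤ 2 / (n : ℝ) :=
  log_falling_factorial_estimate_general n A hA
end
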